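/- arXiv:2105.14647 — 3 statements merged into one kernel-verified Lean document; each statement's English description precedes it below -/
import Mathlib

section
/- Let X̃ be a k×(p+1) real matrix with entries in [-1,1] such that X̃ᵀX̃ is invertible. Then tr((X̃ᵀX̃)⁻¹) ≥ (p+1)/k, with equality if and only if X̃ᵀX̃ = k·I. -/
/-!
Let `λᵢ > 0` be the eigenvalues of the positive definite Gram matrix `A = X̃ᵀX̃`. Then
`tr A⁻¹ = ∑ 1/λᵢ` and `∑ λᵢ = tr A ≤ k(p+1)`. The tangent line of `t ↦ 1/t` at `t = k` gives
`1/λ ≥ 2/k - λ/k²`, with equality only at `λ = k`; summing gives the bound, and equality forces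
every eigenvalue to be `k`, so that `A = k • 1` by the spectral theorem.
-/

open Matrix Finset

theorem inv_sub_tangent_eq {x c : ℝ} (hx : x ≠ 0) (hc : c ≠ 0) :
    x⁻¹ - (2 / c - x / c ^ 2) = (x - c) ^ 2 / (c ^ 2 * x) := by
  field_simp
  ring

theorem two_div_sub_div_sq_le_inv {x c : ℝ} (hx : 0 < x) (hc : c ≠ 0) :
    2 / c - x / c ^ 2 ≤ x⁻¹ := by
  have := inv_sub_tangent_eq hx.ne' hc
  have : 0 ≤ (x - c) ^ 2 / (c ^ 2 * x) := by positivity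
  linarith

theorem two_div_sub_div_sq_eq_inv_iff {x c : ℝ} (hx : 0 < x) (hc : c ≠ 0) :
    2 / c - x / c ^ 2 = x⁻¹ ↔ x = c := by
  rw [eq_comm, ← sub_eq_zero, inv_sub_tangent_eq hx.ne' hc, div_eq_zero_iff, sq_eq_zero_iff,
    sub_eq_zero]
  have : c ^ 2 * x ≠ 0 := by positivity
  tauto

theorem card_div_le_sum_inv_and_eq_iff {ι : Type*} [Fintype ι] [Nonempty ι] {l : ι → ℝ} {c : ℝ}
    (hl : ∀ i, 0 < l i) (hsum : ∑ i, l i ≤ c * Fintype.card ι) :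
    Fintype.card ι / c ≤ ∑ i, (l i)⁻¹ ∧ (∑ i, (l i)⁻¹ = Fintype.card ι / c ↔ ∀ i, l i = c) := by
  have hc : 0 < c := by
    have : 0 < ∑ i, l i := sum_pos (fun i _ ↦ hl i) univ_nonempty
    exact pos_of_mul_pos_left (this.trans_le hsum) (Nat.cast_nonneg _)
  have tangent i : 2 / c - l i / c ^ 2 ≤ (l i)⁻¹ := two_div_sub_div_sq_le_inv (hl i) hc.ne'
  have lower : Fintype.card ι / c ≤ ∑ i, (2 / c - l i / c ^ 2) := by
    calc (Fintype.card ι : ℝ) / c = 2 * Fintype.card ι / c - c * Fintype.card ι / c ^ 2 := by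
          field_simp; ring
      _ ≤ 2 * Fintype.card ι / c - (∑ i, l i) / c ^ 2 := by gcongr
      _ = ∑ i, (2 / c - l i / c ^ 2) := by
          rw [sum_sub_distrib, sum_div, sum_const, card_univ, nsmul_eq_mul]; ring
  refine ⟨lower.trans (sum_le_sum fun i _ ↦ tangent i), fun heq ↦ ?_, fun hall ↦ ?_⟩
  · have := (sum_eq_sum_iff_of_le fun i _ ↦ tangent i).mp
      (le_antisymm (sum_le_sum fun i _ ↦ tangent i) (heq ▸ lower))
    exact fun i ↦ (two_div_sub_div_sq_eq_inv_iff (hl i) hc.ne').mp (this i (mem_univ i))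
  · simp [hall, div_eq_mul_inv]

namespace Matrix

theorem trace_transpose_mul_self_le {m n : Type*} [Fintype m] [Fintype n] {X : Matrix m n ℝ}
    (hX : ∀ i j, |X i j| ≤ 1) : (Xᵀ * X).trace ≤ Fintype.card m * Fintype.card n := by
  calc (Xᵀ * X).trace = ∑ j, ∑ i, X i j ^ 2 := by simp [trace, mul_apply, sq]
    _ ≤ ∑ _j : n, ∑ _i : m, (1 : ℝ) :=
      sum_le_sum fun j _ ↦ sum_le_sum fun i _ ↦ (sq_le_one_iff_abs_le_one _).mpr (hX i j)
    _ = Fintype.card m * Fintype.card n := by simp [mul_comm]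

namespace IsHermitian

variable {𝕜 n : Type*} [RCLike 𝕜] [Fintype n] [DecidableEq n] {A : Matrix n n 𝕜}

theorem spectral_theorem_inv (hA : A.IsHermitian) (h : IsUnit A.det) :
    A⁻¹ = Unitary.conjStarAlgAut 𝕜 _ hA.eigenvectorUnitary
      (diagonal (RCLike.ofReal ∘ (hA.eigenvalues)⁻¹)) := by
  have hl i : hA.eigenvalues i ≠ 0 := by
    have := h.ne_zero
    rw [hA.det_eq_prod_eigenvalues, prod_ne_zero_iff] at this
    exact_mod_cast this i (mem_univ i)
  refine inv_eq_right_inv ?_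
  nth_rw 1 [hA.spectral_theorem]
  rw [← map_mul, diagonal_mul_diagonal, ← map_one (Unitary.conjStarAlgAut 𝕜 _ _), ← diagonal_one]
  congr 2
  ext i
  simp [hl i]

theorem trace_inv_eq_sum_inv_eigenvalues (hA : A.IsHermitian) (h : IsUnit A.det) :
    A⁻¹.trace = ∑ i, ((hA.eigenvalues i)⁻¹ : 𝕜) := by
  rw [hA.spectral_theorem_inv h, Unitary.conjStarAlgAut_apply, trace_mul_cycle,
    Unitary.coe_star_mul_self, one_mul, trace_diagonal]
  simp

theorem eq_smul_one_of_eigenvalues_eq (hA : A.IsHermitian) {c : ℝ}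
    (h : ∀ i, hA.eigenvalues i = c) : A = c • (1 : Matrix n n 𝕜) := by
  rw [hA.spectral_theorem, show RCLike.ofReal ∘ hA.eigenvalues = fun _ ↦ (c : 𝕜) by
    ext i; simp [h i], ← smul_one_eq_diagonal, map_smul, map_one,
    RCLike.real_smul_eq_coe_smul (K := 𝕜)]

end IsHermitian

end Matrix

/-- A-optimality: for a k×(p+1) matrix with entries in [-1,1] and invertible
Gram matrix, tr((X̃ᵀX̃)⁻¹) ≥ (p+1)/k with equality iff X̃ᵀX̃ = k·I. -/
theorem trace_inv_gram_ge (k p : ℕ) (X : Matrix (Fin k) (Fin (p + 1)) ℝ)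
    (hX : ∀ i j, X i j ∈ Set.Icc (-1 : ℝ) 1)
    (hinv : IsUnit (Xᵀ * X).det) :
    ((p : ℝ) + 1) / k ≤ (Xᵀ * X)⁻¹.trace ∧
    ((Xᵀ * X)⁻¹.trace = ((p : ℝ) + 1) / k ↔ Xᵀ * X = (k : ℝ) • 1) := by
  have hA : (Xᵀ * X).PosDef := by
    rw [← conjTranspose_eq_transpose_of_trivial] at hinv ⊢
    exact (posSemidef_conjTranspose_mul_self X).posDef_iff_isUnit.mpr
      ((isUnit_iff_isUnit_det _).mpr hinv)
  have htrace : ∑ i, hA.1.eigenvalues i ≤ k * Fintype.card (Fin (p + 1)) := by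
    have := trace_transpose_mul_self_le fun i j ↦ abs_le.mpr (hX i j)
    simpa [hA.1.trace_eq_sum_eigenvalues] using this
  have htrace_inv : (Xᵀ * X)⁻¹.trace = ∑ i, (hA.1.eigenvalues i)⁻¹ := by
    simpa using hA.1.trace_inv_eq_sum_inv_eigenvalues hinv
  obtain ⟨hle, heq_iff⟩ := card_div_le_sum_inv_and_eq_iff hA.eigenvalues_pos htrace
  rw [Fintype.card_fin, Nat.cast_succ] at hle heq_iff
  rw [htrace_inv]
  refine ⟨hle, fun heq ↦ hA.1.eq_smul_one_of_eigenvalues_eq (heq_iff.mp heq), fun hk ↦ ?_⟩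
  have hk0 : (k : ℝ) ≠ 0 := by
    intro h0
    rw [hk, h0, zero_smul, det_zero] at hinv
    exact not_isUnit_zero hinv
  rw [← htrace_inv, hk, inv_eq_right_inv (B := (k : ℝ)⁻¹ • 1) (by simp [hk0]), trace_smul,
    trace_one]
  simp [div_eq_inv_mul]
end

section
/- Let X be a k×p matrix with entries in {-1,1} such that all column sums are zero and XᵀX = k·I_p (columns pairwise orthogonal). Then Σ_{1≤i<j≤k} δ(x_i,x_j)² = [k²p(p+1) − 4kp²]/8, where x_i are the rows of X and δ counts coordinate agreements. -/
open Matrix Finset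

/-- If a k×p ±1 matrix has all column sums zero and pairwise orthogonal
columns (XᵀX = k·I), then Σ_{i<j} δ(x_i,x_j)² = [k²p(p+1) − 4kp²]/8. -/
theorem discrepancy_attained (k p : ℕ) (X : Matrix (Fin k) (Fin p) ℝ)
    (hX : ∀ i j, X i j = 1 ∨ X i j = -1)
    (hcol : ∀ l : Fin p, ∑ i : Fin k, X i l = 0)
    (horth : Xᵀ * X = (k : ℝ) • 1) :
    (∑ i : Fin k, ∑ j : Fin k, if i < j then
        ((Finset.univ.filter (fun l => X i l = X j l)).card : ℝ) ^ 2 else 0)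
      = ((k : ℝ) ^ 2 * p * ((p : ℝ) + 1) - 4 * k * (p : ℝ) ^ 2) / 8 := by
  set g : Fin k → Fin k → ℝ := fun i j => ∑ l, X i l * X j l with hg
  set d : Fin k → Fin k → ℝ :=
    fun i j => ((Finset.univ.filter (fun l => X i l = X j l)).card : ℝ) with hd
  -- δ(i,j) = (p + ⟨x_i,x_j⟩)/2
  have key : ∀ i j : Fin k, d i j = ((p : ℝ) + g i j) / 2 := by
    intro i j
    have h1 : ∀ l : Fin p, X i l * X j l
        = 2 * (if X i l = X j l then (1:ℝ) else 0) - 1 := by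
      intro l
      rcases hX i l with h | h <;> rcases hX j l with h' | h' <;>
        simp [h, h'] <;> norm_num
    have h2 : g i j = 2 * d i j - p := by
      rw [hg]
      simp only [h1]
      rw [Finset.sum_sub_distrib, ← Finset.mul_sum, Finset.sum_boole]
      simp [hd]
    rw [h2]; ring
  -- entries of XᵀX
  have hentry : ∀ l m : Fin p, (∑ i, X i l * X i m) = if l = m then (k:ℝ) else 0 := by
    intro l m
    have := congrFun (congrFun horth l) m
    simp only [Matrix.mul_apply, Matrix.transpose_apply, Matrix.smul_apply,
      Matrix.one_apply, smul_eq_mul] at this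
    rw [this]
    split <;> simp
  -- Σ_{i,j} g = 0
  have hsum1 : (∑ i : Fin k, ∑ j : Fin k, g i j) = 0 := by
    have : ∀ i : Fin k, ∑ j : Fin k, g i j = ∑ l, X i l * (∑ j : Fin k, X j l) := by
      intro i
      rw [Finset.sum_comm]
      simp [hg, Finset.mul_sum]
    simp [this, hcol]
  -- Σ_{i,j} g² = k² p
  have quad : ∀ (F : Fin k → Fin k → Fin p → Fin p → ℝ),
      (∑ i : Fin k, ∑ j : Fin k, ∑ l : Fin p, ∑ m : Fin p, F i j l m)
        = ∑ l : Fin p, ∑ m : Fin p, ∑ i : Fin k, ∑ j : Fin k, F i j l m := by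
    intro F
    have h1 : ∀ i : Fin k, (∑ j : Fin k, ∑ l : Fin p, ∑ m : Fin p, F i j l m)
        = ∑ l : Fin p, ∑ j : Fin k, ∑ m : Fin p, F i j l m := fun i => Finset.sum_comm
    simp only [h1]
    rw [Finset.sum_comm]
    apply Finset.sum_congr rfl; intro l _
    have h2 : ∀ i : Fin k, (∑ j : Fin k, ∑ m : Fin p, F i j l m)
        = ∑ m : Fin p, ∑ j : Fin k, F i j l m := fun i => Finset.sum_comm
    simp only [h2]
    exact Finset.sum_comm
  have hsum2 : (∑ i : Fin k, ∑ j : Fin k, (g i j) ^ 2) = (k:ℝ)^2 * p := by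
    have expand : ∀ i j : Fin k, (g i j)^2
        = ∑ l, ∑ m, (X i l * X i m) * (X j l * X j m) := by
      intro i j
      rw [hg, sq, Finset.sum_mul_sum]
      apply Finset.sum_congr rfl; intro l _
      apply Finset.sum_congr rfl; intro m _
      ring
    calc (∑ i : Fin k, ∑ j : Fin k, (g i j) ^ 2)
        = ∑ l, ∑ m, ∑ i : Fin k, ∑ j : Fin k, (X i l * X i m) * (X j l * X j m) := by
          simp only [expand]
          exact quad _
      _ = ∑ l, ∑ m, (∑ i, X i l * X i m) * (∑ j, X j l * X j m) := by
          apply Finset.sum_congr rfl; intro l _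
          apply Finset.sum_congr rfl; intro m _
          rw [Finset.sum_mul_sum]
      _ = ∑ l, ∑ m : Fin p, if l = m then (k:ℝ)^2 else 0 := by
          apply Finset.sum_congr rfl; intro l _
          apply Finset.sum_congr rfl; intro m _
          rw [hentry]
          split <;> simp [sq]
      _ = (k:ℝ)^2 * p := by
          simp [Finset.sum_ite_eq, mul_comm]
  -- total sum of d²
  have hT : (∑ i : Fin k, ∑ j : Fin k, (d i j)^2) = ((k:ℝ)^2 * p^2 + (k:ℝ)^2 * p) / 4 := by
    have e : ∀ i j : Fin k, (d i j)^2
        = (p:ℝ)^2/4 + (2*(p:ℝ)/4) * g i j + (1/4) * (g i j)^2 := by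
      intro i j; rw [key]; ring
    simp only [e, Finset.sum_add_distrib, ← Finset.mul_sum, Finset.sum_const,
      Finset.card_univ, Fintype.card_fin, nsmul_eq_mul]
    rw [hsum1, hsum2]
    push_cast; ring
  -- diagonal
  have hdiag : ∀ i : Fin k, d i i = (p : ℝ) := by
    intro i
    simp [hd, Finset.filter_true_of_mem]
  -- symmetry
  have hsymm : ∀ i j : Fin k, d i j = d j i := by
    intro i j
    simp only [hd]
    congr 1
    apply Finset.card_bij (fun l _ => l) <;> simp [eq_comm]
  -- split the full sum into lower, upper, diagonal
  have split : (∑ i : Fin k, ∑ j : Fin k, (d i j)^2)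
      = (∑ i : Fin k, ∑ j : Fin k, if i < j then (d i j)^2 else 0)
        + (∑ i : Fin k, ∑ j : Fin k, if j < i then (d i j)^2 else 0)
        + ∑ i : Fin k, (d i i)^2 := by
    have : ∀ i j : Fin k, (d i j)^2
        = (if i < j then (d i j)^2 else 0) + (if j < i then (d i j)^2 else 0)
          + (if i = j then (d i j)^2 else 0) := by
      intro i j
      rcases lt_trichotomy i j with h | h | h
      · simp [h, not_lt_of_gt h, ne_of_lt h]
      · simp [h, lt_irrefl]
      · simp [h, not_lt_of_gt h, (ne_of_lt h).symm]
    rw [Finset.sum_congr rfl fun i _ => Finset.sum_congr rfl fun j _ => this i j]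
    simp only [Finset.sum_add_distrib]
    congr 1
    apply Finset.sum_congr rfl; intro i _
    rw [Finset.sum_ite_eq univ i (fun j => (d i j)^2)]
    simp
  have hupper : (∑ i : Fin k, ∑ j : Fin k, if j < i then (d i j)^2 else 0)
      = (∑ i : Fin k, ∑ j : Fin k, if i < j then (d i j)^2 else 0) := by
    rw [Finset.sum_comm]
    apply Finset.sum_congr rfl; intro i _
    apply Finset.sum_congr rfl; intro j _
    rw [hsymm i j]
  have hdiagsum : (∑ i : Fin k, (d i i)^2) = (k:ℝ) * p^2 := by
    have e : ∀ i : Fin k, (d i i)^2 = (p:ℝ)^2 := fun i => by rw [hdiag]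
    simp [e, mul_comm]
  have target : (∑ i : Fin k, ∑ j : Fin k, if i < j then (d i j)^2 else 0)
      = ((k : ℝ) ^ 2 * p * ((p : ℝ) + 1) - 4 * k * (p : ℝ) ^ 2) / 8 := by
    have := split
    rw [hupper, hdiagsum, hT] at this
    linarith
  exact target
end

section
/- Let X be a k×p matrix with entries {-1,1} forming an orthogonal array of strength 4, with p ≥ 4, and let X̃ be the k×(1 + p + C(p,2)) matrix whose columns are: the all-ones column, the p columns of X, and the C(p,2) element-wise products of pairs of distinct columns of X. Then X̃ᵀX̃ = k·I. -/
open Matrix Finset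

lemma oa4_master (k p : ℕ)
    (X : Matrix (Fin k) (Fin p) ℝ)
    (hX : ∀ i j, X i j = 1 ∨ X i j = -1)
    (hOA : ∀ a b c d : Fin p,
      a ≠ b → a ≠ c → a ≠ d → b ≠ c → b ≠ d → c ≠ d →
      ∀ s t u v : ℝ,
        (s = 1 ∨ s = -1) → (t = 1 ∨ t = -1) →
        (u = 1 ∨ u = -1) → (v = 1 ∨ v = -1) →
        (Finset.univ.filter
          (fun i => X i a = s ∧ X i b = t ∧ X i c = u ∧ X i d = v)).card * 16
          = k)
    (a b c d : Fin p)
    (hab : a ≠ b) (hac : a ≠ c) (had : a ≠ d) (hbc : b ≠ c) (hbd : b ≠ d) (hcd : c ≠ d)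
    (g : ℝ → ℝ → ℝ → ℝ → ℝ) :
    (16 : ℝ) * ∑ i, g (X i a) (X i b) (X i c) (X i d)
      = (k : ℝ) * ∑ s ∈ ({1, -1} : Finset ℝ), ∑ t ∈ ({1, -1} : Finset ℝ),
          ∑ u ∈ ({1, -1} : Finset ℝ), ∑ v ∈ ({1, -1} : Finset ℝ), g s t u v := by
  classical
  set S : Finset ℝ := {1, -1} with hS
  have hmem : ∀ (x : ℝ), (x = 1 ∨ x = -1) → x ∈ S := by
    intro x hx; simp [hS]; tauto
  have hmap : ∀ i : Fin k, i ∈ (univ : Finset (Fin k)) →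
      (X i a, X i b, X i c, X i d) ∈ S ×ˢ S ×ˢ S ×ˢ S := by
    intro i _
    simp only [Finset.mem_product]
    exact ⟨hmem _ (hX i a), hmem _ (hX i b), hmem _ (hX i c), hmem _ (hX i d)⟩
  rw [← Finset.sum_fiberwise_of_maps_to hmap (fun i => g (X i a) (X i b) (X i c) (X i d)),
    Finset.mul_sum]
  have key : ∀ pat ∈ S ×ˢ S ×ˢ S ×ˢ S,
      16 * ∑ i ∈ univ.filter (fun i => (X i a, X i b, X i c, X i d) = pat),
        g (X i a) (X i b) (X i c) (X i d)
      = (k : ℝ) * g pat.1 pat.2.1 pat.2.2.1 pat.2.2.2 := by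
    rintro ⟨s, t, u, v⟩ hpat
    simp only [Finset.mem_product] at hpat
    obtain ⟨hs, ht, hu, hv⟩ := hpat
    have hs' : s = 1 ∨ s = -1 := by simpa [hS] using hs
    have ht' : t = 1 ∨ t = -1 := by simpa [hS] using ht
    have hu' : u = 1 ∨ u = -1 := by simpa [hS] using hu
    have hv' : v = 1 ∨ v = -1 := by simpa [hS] using hv
    have hfil : univ.filter (fun i => (X i a, X i b, X i c, X i d) = (s, t, u, v))
        = univ.filter (fun i => X i a = s ∧ X i b = t ∧ X i c = u ∧ X i d = v) := by
      apply Finset.filter_congr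
      intro i _
      simp [Prod.ext_iff]
    rw [hfil]
    have hsum : ∑ i ∈ univ.filter (fun i => X i a = s ∧ X i b = t ∧ X i c = u ∧ X i d = v),
        g (X i a) (X i b) (X i c) (X i d)
        = (univ.filter (fun i => X i a = s ∧ X i b = t ∧ X i c = u ∧ X i d = v)).card
            * g s t u v := by
      rw [Finset.sum_congr rfl (fun i hi => ?_), Finset.sum_const, nsmul_eq_mul]
      simp only [Finset.mem_filter] at hi
      rw [hi.2.1, hi.2.2.1, hi.2.2.2.1, hi.2.2.2.2]
    rw [hsum]
    have := hOA a b c d hab hac had hbc hbd hcd s t u v hs' ht' hu' hv'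
    have hcast : ((univ.filter (fun i => X i a = s ∧ X i b = t ∧ X i c = u ∧ X i d = v)).card
        : ℝ) * 16 = (k : ℝ) := by exact_mod_cast congrArg (Nat.cast : ℕ → ℝ) this
    rw [← hcast]; ring
  rw [Finset.sum_congr rfl key]
  simp only [Finset.sum_product, Finset.mul_sum]

/-- For a strength-4 orthogonal array X (p ≥ 4 columns), the augmented matrix
X̃ whose columns are the all-ones column, the columns of X, and the
element-wise products of pairs of distinct columns of X satisfies
X̃ᵀX̃ = k·I. -/
theorem oa4_interaction_gram (k p : ℕ) (hp : 4 ≤ p)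
    (X : Matrix (Fin k) (Fin p) ℝ)
    (hX : ∀ i j, X i j = 1 ∨ X i j = -1)
    (hOA : ∀ a b c d : Fin p,
      a ≠ b → a ≠ c → a ≠ d → b ≠ c → b ≠ d → c ≠ d →
      ∀ s t u v : ℝ,
        (s = 1 ∨ s = -1) → (t = 1 ∨ t = -1) →
        (u = 1 ∨ u = -1) → (v = 1 ∨ v = -1) →
        (Finset.univ.filter
          (fun i => X i a = s ∧ X i b = t ∧ X i c = u ∧ X i d = v)).card * 16
          = k)
    (Xt : Matrix (Fin k) (Unit ⊕ Fin p ⊕ {q : Fin p × Fin p // q.1 < q.2}) ℝ)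
    (hXt1 : ∀ i, Xt i (Sum.inl ()) = 1)
    (hXt2 : ∀ i (a : Fin p), Xt i (Sum.inr (Sum.inl a)) = X i a)
    (hXt3 : ∀ i (q : {q : Fin p × Fin p // q.1 < q.2}),
      Xt i (Sum.inr (Sum.inr q)) = X i q.1.1 * X i q.1.2) :
    Xtᵀ * Xt = (k : ℝ) • 1 := by
  classical
  -- existence of fresh indices
  have hext : ∀ s : Finset (Fin p), s.card ≤ 3 → ∃ x, x ∉ s := by
    intro s hs
    have h1 : 0 < ((univ : Finset (Fin p)) \ s).card := by
      rw [Finset.card_sdiff_of_subset (Finset.subset_univ s)]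
      simp only [Finset.card_univ, Fintype.card_fin]; omega
    obtain ⟨x, hx⟩ := Finset.card_pos.mp h1
    exact ⟨x, (Finset.mem_sdiff.mp hx).2⟩
  have hsq : ∀ i j, X i j * X i j = 1 := by
    intro i j; rcases hX i j with h | h <;> rw [h] <;> norm_num
  have hone : (1 : ℝ) ≠ -1 := by norm_num
  -- sums of products of distinct columns vanish
  have sum4 : ∀ a b c d : Fin p, a ≠ b → a ≠ c → a ≠ d → b ≠ c → b ≠ d → c ≠ d →
      ∑ i, X i a * X i b * X i c * X i d = 0 := by
    intro a b c d hab hac had hbc hbd hcd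
    have h := oa4_master k p X hX hOA a b c d hab hac had hbc hbd hcd
      (fun s t u v => s * t * u * v)
    norm_num [Finset.sum_pair hone] at h
    linarith [h]
  have sum3 : ∀ a b c : Fin p, a ≠ b → a ≠ c → b ≠ c →
      ∑ i, X i a * X i b * X i c = 0 := by
    intro a b c hab hac hbc
    obtain ⟨d, hd⟩ := hext {a, b, c} (by
      calc ({a, b, c} : Finset (Fin p)).card ≤ _ := Finset.card_insert_le _ _
        _ ≤ 3 := by
          have := Finset.card_insert_le b ({c} : Finset (Fin p))
          simp at this ⊢; omega)
    simp only [Finset.mem_insert, Finset.mem_singleton, not_or] at hd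
    obtain ⟨hda, hdb, hdc⟩ := hd
    have h := oa4_master k p X hX hOA a b c d hab hac (Ne.symm hda) hbc (Ne.symm hdb)
      (Ne.symm hdc) (fun s t u v => s * t * u)
    norm_num [Finset.sum_pair hone] at h
    linarith [h]
  have sum2 : ∀ a b : Fin p, a ≠ b → ∑ i, X i a * X i b = 0 := by
    intro a b hab
    obtain ⟨c, hc⟩ := hext {a, b} (by
      calc ({a, b} : Finset (Fin p)).card ≤ _ := Finset.card_insert_le _ _
        _ ≤ 3 := by simp)
    simp only [Finset.mem_insert, Finset.mem_singleton, not_or] at hc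
    obtain ⟨d, hd⟩ := hext {a, b, c} (by
      calc ({a, b, c} : Finset (Fin p)).card ≤ _ := Finset.card_insert_le _ _
        _ ≤ 3 := by
          have := Finset.card_insert_le b ({c} : Finset (Fin p))
          simp at this ⊢; omega)
    simp only [Finset.mem_insert, Finset.mem_singleton, not_or] at hd
    obtain ⟨hda, hdb, hdc⟩ := hd
    have h := oa4_master k p X hX hOA a b c d hab (Ne.symm hc.1) (Ne.symm hda)
      (Ne.symm hc.2) (Ne.symm hdb) (Ne.symm hdc) (fun s t u v => s * t)
    norm_num [Finset.sum_pair hone] at h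
    linarith [h]
  have sum1 : ∀ a : Fin p, ∑ i, X i a = 0 := by
    intro a
    obtain ⟨b, hb⟩ := hext {a} (by simp)
    simp only [Finset.mem_singleton] at hb
    obtain ⟨c, hc⟩ := hext {a, b} (by
      calc ({a, b} : Finset (Fin p)).card ≤ _ := Finset.card_insert_le _ _
        _ ≤ 3 := by simp)
    simp only [Finset.mem_insert, Finset.mem_singleton, not_or] at hc
    obtain ⟨d, hd⟩ := hext {a, b, c} (by
      calc ({a, b, c} : Finset (Fin p)).card ≤ _ := Finset.card_insert_le _ _
        _ ≤ 3 := by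
          have := Finset.card_insert_le b ({c} : Finset (Fin p))
          simp at this ⊢; omega)
    simp only [Finset.mem_insert, Finset.mem_singleton, not_or] at hd
    obtain ⟨hda, hdb, hdc⟩ := hd
    have h := oa4_master k p X hX hOA a b c d (Ne.symm hb) (Ne.symm hc.1) (Ne.symm hda)
      (Ne.symm hc.2) (Ne.symm hdb) (Ne.symm hdc) (fun s t u v => s)
    norm_num [Finset.sum_pair hone] at h
    linarith [h]
  -- diagonal sums
  have sumone : ∑ _i : Fin k, (1 : ℝ) = (k : ℝ) := by simp
  -- three-factor helper (arbitrary first index)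
  have htri : ∀ a b c : Fin p, b ≠ c → ∑ i, X i a * (X i b * X i c) = 0 := by
    intro a b c hbc
    by_cases h1 : a = b
    · subst h1
      calc ∑ i, X i a * (X i a * X i c) = ∑ i, X i c := by
            refine Finset.sum_congr rfl fun i _ => ?_
            rw [← mul_assoc, hsq, one_mul]
        _ = 0 := sum1 c
    by_cases h2 : a = c
    · subst h2
      calc ∑ i, X i a * (X i b * X i a) = ∑ i, X i b := by
            refine Finset.sum_congr rfl fun i _ => ?_
            rw [show X i a * (X i b * X i a) = X i b * (X i a * X i a) by ring, hsq, mul_one]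
        _ = 0 := sum1 b
    · calc ∑ i, X i a * (X i b * X i c) = ∑ i, X i a * X i b * X i c := by
            refine Finset.sum_congr rfl fun i _ => ?_; ring
        _ = 0 := sum3 a b c h1 h2 hbc
  -- four-factor helper for two distinct increasing pairs
  have hquad : ∀ a b c d : Fin p, a < b → c < d → ¬(a = c ∧ b = d) →
      ∑ i, (X i a * X i b) * (X i c * X i d) = 0 := by
    intro a b c d hab hcd hne
    by_cases h1 : a = c
    · subst h1
      have hbd : b ≠ d := fun h => hne ⟨rfl, h⟩
      calc ∑ i, (X i a * X i b) * (X i a * X i d) = ∑ i, X i b * X i d := by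
            refine Finset.sum_congr rfl fun i _ => ?_
            rw [show (X i a * X i b) * (X i a * X i d)
              = (X i a * X i a) * (X i b * X i d) by ring, hsq, one_mul]
        _ = 0 := sum2 b d hbd
    by_cases h2 : a = d
    · subst h2
      have hbc : b ≠ c := ((hcd.trans hab).ne).symm
      calc ∑ i, (X i a * X i b) * (X i c * X i a) = ∑ i, X i b * X i c := by
            refine Finset.sum_congr rfl fun i _ => ?_
            rw [show (X i a * X i b) * (X i c * X i a)
              = (X i a * X i a) * (X i b * X i c) by ring, hsq, one_mul]
        _ = 0 := sum2 b c hbc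
    by_cases h3 : b = c
    · subst h3
      have had : a ≠ d := (hab.trans hcd).ne
      calc ∑ i, (X i a * X i b) * (X i b * X i d) = ∑ i, X i a * X i d := by
            refine Finset.sum_congr rfl fun i _ => ?_
            rw [show (X i a * X i b) * (X i b * X i d)
              = (X i b * X i b) * (X i a * X i d) by ring, hsq, one_mul]
        _ = 0 := sum2 a d had
    by_cases h4 : b = d
    · subst h4
      calc ∑ i, (X i a * X i b) * (X i c * X i b) = ∑ i, X i a * X i c := by
            refine Finset.sum_congr rfl fun i _ => ?_
            rw [show (X i a * X i b) * (X i c * X i b)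
              = (X i b * X i b) * (X i a * X i c) by ring, hsq, one_mul]
        _ = 0 := sum2 a c h1
    · calc ∑ i, (X i a * X i b) * (X i c * X i d) = ∑ i, X i a * X i b * X i c * X i d := by
            refine Finset.sum_congr rfl fun i _ => ?_; ring
        _ = 0 := sum4 a b c d hab.ne h1 h2 h3 h4 hcd.ne
  -- the key Gram entries
  have key : ∀ r c : Unit ⊕ Fin p ⊕ {q : Fin p × Fin p // q.1 < q.2},
      ∑ i, Xt i r * Xt i c = if r = c then (k : ℝ) else 0 := by
    rintro (⟨⟩ | a | ⟨⟨a, b⟩, hab⟩) (⟨⟩ | a' | ⟨⟨a', b'⟩, ha'b'⟩)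
    · rw [if_pos rfl]
      simp only [hXt1, mul_one]
      exact sumone
    · rw [if_neg (by simp)]
      simp only [hXt1, hXt2, one_mul]
      exact sum1 a'
    · rw [if_neg (by simp)]
      simp only [hXt1, hXt3, one_mul]
      exact sum2 _ _ (ne_of_lt ha'b')
    · rw [if_neg (by simp)]
      simp only [hXt1, hXt2, mul_one]
      exact sum1 a
    · by_cases h : a = a'
      · subst h
        rw [if_pos rfl]
        simp only [hXt2]
        calc ∑ i, X i a * X i a = ∑ _i : Fin k, (1 : ℝ) :=
              Finset.sum_congr rfl fun i _ => hsq i a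
          _ = (k : ℝ) := sumone
      · rw [if_neg (by simp [h])]
        simp only [hXt2]
        exact sum2 a a' h
    · rw [if_neg (by simp)]
      simp only [hXt2, hXt3]
      exact htri a a' b' (ne_of_lt ha'b')
    · rw [if_neg (by simp)]
      simp only [hXt1, hXt3, mul_one]
      exact sum2 _ _ (ne_of_lt hab)
    · rw [if_neg (by simp)]
      simp only [hXt2, hXt3]
      calc ∑ i, X i a * X i b * X i a' = ∑ i, X i a' * (X i a * X i b) := by
            refine Finset.sum_congr rfl fun i _ => ?_; ring
        _ = 0 := htri a' a b (ne_of_lt hab)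
    · by_cases h : a = a' ∧ b = b'
      · obtain ⟨rfl, rfl⟩ := h
        rw [if_pos rfl]
        simp only [hXt3]
        calc ∑ i, X i a * X i b * (X i a * X i b) = ∑ _i : Fin k, (1 : ℝ) := by
              refine Finset.sum_congr rfl fun i _ => ?_
              rw [show X i a * X i b * (X i a * X i b)
                = (X i a * X i a) * (X i b * X i b) by ring, hsq, hsq, mul_one]
          _ = (k : ℝ) := sumone
      · rw [if_neg (by
          simp only [Sum.inr.injEq, Subtype.mk.injEq, Prod.mk.injEq]
          tauto)]
        simp only [hXt3]
        exact hquad a b a' b' hab ha'b' h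
  -- conclude
  ext r c
  rw [Matrix.mul_apply]
  simp only [Matrix.transpose_apply, Matrix.smul_apply, Matrix.one_apply, smul_eq_mul]
  rw [key r c]
  split_ifs <;> simp
end
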